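/- arXiv:1704.05889 — 5 statements merged into one kernel-verified Lean document; each statement's English description precedes it below -/
import Mathlib

section
/- For integers n ≥ 4 and s ≥ 1, there do not exist nonnegative integers a_0, a_1, ..., a_n, a_{n+1} satisfying: (i) the total sum a_0 + a_1 + ... + a_{n+1} ≤ sn - 1, and (ii) for each u ∈ {0, n+1} and each i ∈ {1, ..., n}, a_u + a_i + a_{i+1} + ... + a_{i+n-3} ≥ s(n-2), where indices among {1,...,n} are taken cyclically (x_{n+j} identified with x_j). -/
/-!
Summing the `n` inequalities for a fixed apex `u` counts every `a_i` with `1 ≤ i ≤ n` exactly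
`n - 2` times, because the windows are the `n` cyclic shifts of one another:
`n a_u + (n - 2) S ≥ n s (n - 2)` with `S = a_1 + ⋯ + a_n`. Adding the two apices gives
`n (a_0 + a_{n+1}) + 2 (n - 2) S ≥ 2 n s (n - 2)`, and as `n ≤ 2 (n - 2)` once `n ≥ 4`, the left
side is at most `2 (n - 2)` times the total degree, which is therefore at least `s n`.
-/

open Finset

namespace Finset

@[to_additive]
theorem prod_Ico_mod {M : Type*} [CommMonoid M] (f : ℕ → M) (k n : ℕ) :
    ∏ m ∈ Ico k (k + n), f (m % n) = ∏ m ∈ range n, f m := by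
  have h := congrArg (fun s => (s.map f).prod) (Nat.multiset_Ico_map_mod k n)
  simp only [Multiset.map_map] at h
  exact h

@[to_additive]
theorem prod_range_add_mod {M : Type*} [CommMonoid M] (f : ℕ → M) (k n : ℕ) :
    ∏ m ∈ range n, f ((m + k) % n) = ∏ m ∈ range n, f m := by
  rw [← prod_Ico_mod f k n, prod_Ico_eq_prod_range, Nat.add_sub_cancel_left]
  simp only [add_comm]

end Finset

theorem sum_Icc_cyclic_window {M : Type*} [AddCommMonoid M] (a : ℕ → M) (n L : ℕ) :
    ∑ i ∈ Icc 1 n, ∑ k ∈ range L, a ((i + k - 1) % n + 1) = L • ∑ m ∈ range n, a (m + 1) := by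
  rw [← Ico_add_one_right_eq_Icc, sum_Ico_eq_sum_range, Nat.add_sub_cancel, sum_comm]
  simp only [add_assoc, Nat.add_sub_cancel_left, sum_range_add_mod fun m => a (m + 1), sum_const, card_range]

theorem mul_le_mul_add_sum_of_forall_le_add_window {a : ℕ → ℕ} {n L c x : ℕ}
    (h : ∀ i ∈ Icc 1 n, c ≤ x + ∑ k ∈ range L, a ((i + k - 1) % n + 1)) :
    n * c ≤ n * x + L * ∑ m ∈ range n, a (m + 1) := by
  simpa [sum_add_distrib, sum_Icc_cyclic_window] using sum_le_sum h

theorem le_add_add_of_window_bounds {n s x y S : ℕ} (hn : 4 ≤ n)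
    (hx : n * (s * (n - 2)) ≤ n * x + (n - 2) * S)
    (hy : n * (s * (n - 2)) ≤ n * y + (n - 2) * S) :
    s * n ≤ x + S + y := by
  obtain ⟨m, rfl⟩ : ∃ m, n = m + 2 := ⟨n - 2, by omega⟩
  simp only [Nat.add_sub_cancel] at hx hy
  have hm : 2 ≤ m := by omega
  by_contra! h
  nlinarith

/-- Key combinatorial lemma for the lower bound of the Waldschmidt constant of the
Stanley-Reisner ideal of the bipyramid `B_n`: there is no exponent vector
`a_0, …, a_{n+1}` of total degree at most `s n - 1` satisfying all `2n` inequalities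
`a_u + a_i + a_{i+1} + ⋯ + a_{i+n-3} ≥ s (n-2)` for `u ∈ {0, n+1}` and `i ∈ {1,…,n}`,
indices among `{1,…,n}` taken cyclically. -/
theorem stmt0 (n s : ℕ) (hn : 4 ≤ n) (hs : 1 ≤ s) :
    ¬ ∃ a : ℕ → ℕ,
      (∑ j ∈ Finset.range (n + 2), a j ≤ s * n - 1) ∧
      (∀ u ∈ ({0, n + 1} : Finset ℕ), ∀ i ∈ Finset.Icc 1 n,
        s * (n - 2) ≤ a u + ∑ k ∈ Finset.range (n - 2), a ((i + k - 1) % n + 1)) := by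
  rintro ⟨a, htot, hwindow⟩
  have hsplit : ∑ j ∈ range (n + 2), a j = ∑ m ∈ range n, a (m + 1) + a 0 + a (n + 1) := by
    rw [sum_range_succ, sum_range_succ']
  have hcover := le_add_add_of_window_bounds hn
    (mul_le_mul_add_sum_of_forall_le_add_window (hwindow 0 (by simp)))
    (mul_le_mul_add_sum_of_forall_le_add_window (hwindow (n + 1) (by simp)))
  have hpos : 0 < s * n := Nat.mul_pos hs (by omega)
  omega
end

section
/- For n ≥ 3, the monomial x_0 x_{n+1} x_1 x_2 ··· x_n of degree n+2 lies in the n-th symbolic power of I_{D_n}, defined as the intersection of the n-th powers of the primes ⟨x_0, x_{n+1}, T_i⟩ (i=1..n), ⟨x_0, S_i⟩ (i=1..n), ⟨x_{n+1}, S_i⟩ (i=1..n), and ⟨x_1, ..., x_n⟩, where S_i = {x_i, ..., x_{i+n-2}} and T_i = {x_i, ..., x_{i+n-3}} with indices in {1,...,n} cyclic modulo n. -/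
/-!
Every prime in the intersection contains at least `n` of the variables dividing
`x_0 x_{n+1} x_1 ⋯ x_n`, and a product of `n` elements of an ideal lies in its `n`-th power.
The only counting needed is that a cyclic window of `m ≤ n` consecutive indices in
`{1, …, n}` has exactly `m` elements.
-/

open MvPolynomial Finset

theorem prod_mem_pow_card_of_subset {R ι : Type*} [CommRing R] {I : Ideal R}
    {s t : Finset ι} {f : ι → R} (hts : t ⊆ s) (hf : ∀ j ∈ t, f j ∈ I) :
    ∏ j ∈ s, f j ∈ I ^ #t := by
  classical
  rw [← prod_sdiff hts, ← prod_const]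
  exact Ideal.mul_mem_left _ _ (Ideal.prod_mem_prod hf)

theorem mul_mem_pow_of_le_add {R : Type*} [CommRing R] {I : Ideal R} {a b : R} {p q n : ℕ}
    (ha : a ∈ I ^ p) (hb : b ∈ I ^ q) (h : n ≤ p + q) : a * b ∈ I ^ n :=
  Ideal.pow_le_pow_right h (pow_add I p q ▸ Ideal.mul_mem_mul ha hb)

/-- In the paper's notation, `S_i = cyclicWindow n i (n - 1)` and
`T_i = cyclicWindow n i (n - 2)`. -/
def cyclicWindow (n i m : ℕ) : Finset ℕ :=
  (range m).image fun k => (i + k - 1) % n + 1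

theorem cyclicWindow_subset_Icc {n i m : ℕ} (hm : m ≤ n) : cyclicWindow n i m ⊆ Icc 1 n := by
  intro j hj
  obtain ⟨k, hk, rfl⟩ := mem_image.mp hj
  have := Nat.mod_lt (i + k - 1) (show 0 < n by grind)
  grind

theorem card_cyclicWindow {n i m : ℕ} (hi : 1 ≤ i) (hm : m ≤ n) : #(cyclicWindow n i m) = m := by
  rw [cyclicWindow, card_image_of_injOn, card_range]
  intro a ha b hb hab
  simp only [coe_range, Set.mem_Iio] at ha hb
  have hmod : (i - 1 + a) % n = (i - 1 + b) % n := by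
    simpa [Nat.sub_add_comm hi] using hab
  have := Nat.ModEq.add_left_cancel' (i - 1) hmod
  rwa [Nat.ModEq, Nat.mod_eq_of_lt (by omega), Nat.mod_eq_of_lt (by omega)] at this

theorem prod_Icc_mem_pow_of_cyclicWindow {R : Type*} [CommRing R] {I : Ideal R} {f : ℕ → R}
    {n i m : ℕ} (hi : 1 ≤ i) (hm : m ≤ n) (hf : ∀ k < m, f ((i + k - 1) % n + 1) ∈ I) :
    ∏ j ∈ Icc 1 n, f j ∈ I ^ m := by
  rw [← card_cyclicWindow hi hm]
  refine prod_mem_pow_card_of_subset (cyclicWindow_subset_Icc hm) fun j hj => ?_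
  obtain ⟨k, hk, rfl⟩ := mem_image.mp hj
  exact hf k (mem_range.mp hk)

theorem stmt10_general (K : Type*) [Field K] (n : ℕ)
    (e : ℕ → Fin (n + 2)) :
    (X (e 0) * X (e (n + 1)) * ∏ j ∈ Finset.Icc 1 n, X (e j) : MvPolynomial (Fin (n + 2)) K) ∈
      (⨅ i ∈ Finset.Icc 1 n,
        (Ideal.span ({X (e 0), X (e (n + 1))} ∪
          {p | ∃ k < n - 2, p = (X (e ((i + k - 1) % n + 1)) : MvPolynomial (Fin (n + 2)) K)}))
          ^ n) ⊓
      (⨅ i ∈ Finset.Icc 1 n,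
        (Ideal.span ({X (e 0)} ∪
          {p | ∃ k < n - 1, p = (X (e ((i + k - 1) % n + 1)) : MvPolynomial (Fin (n + 2)) K)}))
          ^ n) ⊓
      (⨅ i ∈ Finset.Icc 1 n,
        (Ideal.span ({X (e (n + 1))} ∪
          {p | ∃ k < n - 1, p = (X (e ((i + k - 1) % n + 1)) : MvPolynomial (Fin (n + 2)) K)}))
          ^ n) ⊓
      (Ideal.span {p | ∃ j ∈ Finset.Icc 1 n, p = (X (e j) : MvPolynomial (Fin (n + 2)) K)})
        ^ n := by
  simp only [Submodule.mem_inf, Submodule.mem_iInf, mem_Icc]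
  refine ⟨⟨⟨fun i hi => ?_, fun i hi => ?_⟩, fun i hi => ?_⟩, ?_⟩
  · refine mul_mem_pow_of_le_add (p := 2) ?_
      (prod_Icc_mem_pow_of_cyclicWindow hi.1 tsub_le_self
        fun k hk => Ideal.subset_span (Or.inr ⟨k, hk, rfl⟩)) (by omega)
    rw [sq]
    exact Ideal.mul_mem_mul (Ideal.subset_span (by simp)) (Ideal.subset_span (by simp))
  · rw [mul_right_comm]
    refine Ideal.mul_mem_right _ _ (mul_mem_pow_of_le_add (p := 1) ?_
      (prod_Icc_mem_pow_of_cyclicWindow hi.1 tsub_le_self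
        fun k hk => Ideal.subset_span (Or.inr ⟨k, hk, rfl⟩)) (by omega))
    rw [pow_one]
    exact Ideal.subset_span (by simp)
  · rw [mul_assoc]
    refine Ideal.mul_mem_left _ _ (mul_mem_pow_of_le_add (p := 1) ?_
      (prod_Icc_mem_pow_of_cyclicWindow hi.1 tsub_le_self
        fun k hk => Ideal.subset_span (Or.inr ⟨k, hk, rfl⟩)) (by omega))
    rw [pow_one]
    exact Ideal.subset_span (by simp)
  · refine Ideal.mul_mem_left _ _ (Ideal.pow_le_pow_right (show n ≤ #(Icc 1 n) by simp) ?_)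
    exact prod_mem_pow_card_of_subset subset_rfl
      fun j hj => Ideal.subset_span ⟨j, mem_Icc.mp hj, rfl⟩

/-- For `n ≥ 3`, the monomial `x_0 x_{n+1} x_1 ⋯ x_n` (of degree `n+2`) lies in the `n`-th
symbolic power of `I_{D_n}`, i.e. in the intersection of the `n`-th powers of the primes
`⟨x_0, x_{n+1}, T_i⟩`, `⟨x_0, S_i⟩`, `⟨x_{n+1}, S_i⟩` (for `i = 1,…,n`) and
`⟨x_1,…,x_n⟩`, where `S_i = {x_i,…,x_{i+n-2}}` and `T_i = {x_i,…,x_{i+n-3}}` with cyclic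
indices modulo `n` in `{1,…,n}`. -/
theorem stmt10 (K : Type*) [Field K] (n : ℕ) (hn : 3 ≤ n)
    (e : ℕ → Fin (n + 2)) (he : ∀ k, (e k : ℕ) = k % (n + 2)) :
    (X (e 0) * X (e (n + 1)) * ∏ j ∈ Finset.Icc 1 n, X (e j) : MvPolynomial (Fin (n + 2)) K) ∈
      (⨅ i ∈ Finset.Icc 1 n,
        (Ideal.span ({X (e 0), X (e (n + 1))} ∪
          {p | ∃ k < n - 2, p = (X (e ((i + k - 1) % n + 1)) : MvPolynomial (Fin (n + 2)) K)}))
          ^ n) ⊓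
      (⨅ i ∈ Finset.Icc 1 n,
        (Ideal.span ({X (e 0)} ∪
          {p | ∃ k < n - 1, p = (X (e ((i + k - 1) % n + 1)) : MvPolynomial (Fin (n + 2)) K)}))
          ^ n) ⊓
      (⨅ i ∈ Finset.Icc 1 n,
        (Ideal.span ({X (e (n + 1))} ∪
          {p | ∃ k < n - 1, p = (X (e ((i + k - 1) % n + 1)) : MvPolynomial (Fin (n + 2)) K)}))
          ^ n) ⊓
      (Ideal.span {p | ∃ j ∈ Finset.Icc 1 n, p = (X (e j) : MvPolynomial (Fin (n + 2)) K)})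
        ^ n :=
  stmt10_general K n e
end

section
/- For integers n ≥ 3 and s ≥ 1, there do not exist nonnegative integers a_0, a_1, ..., a_n, a_{n+1} such that: (i) a_0 + a_1 + ... + a_{n+1} ≤ s(n+2) - 1, and (ii) for every i ∈ {0, 1, ..., n+1}, the sum of all a_j except a_i and a_{i+1} (indices modulo n+2) is at least sn. -/
open Finset

/-! Adding up the `n + 2` conditions (ii), each `a_j` is omitted exactly twice, so
`(n + 2) s n ≤ n · ∑ a`, i.e. `∑ a ≥ s (n + 2)`, contradicting (i). -/

theorem Finset.sum_range_comp_succ_mod {M : Type*} [AddCommMonoid M] (f : ℕ → M) (m : ℕ) :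
    ∑ i ∈ range m, f ((i + 1) % m) = ∑ i ∈ range m, f i := by
  cases m with
  | zero => rfl
  | succ k =>
    rw [sum_range_succ, sum_range_succ', Nat.mod_self]
    congr 1
    refine sum_congr rfl fun i hi => ?_
    rw [Nat.mod_eq_of_lt (by simpa using hi)]

theorem Finset.sum_erase_erase_add_add {ι M : Type*} [DecidableEq ι] [AddCommMonoid M]
    {s : Finset ι} {i j : ι} (hi : i ∈ s) (hj : j ∈ s) (hji : j ≠ i) (f : ι → M) :
    ∑ k ∈ (s.erase i).erase j, f k + f j + f i = ∑ k ∈ s, f k := by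
  rw [sum_erase_add _ _ (mem_erase.2 ⟨hji, hj⟩), sum_erase_add _ _ hi]

theorem Nat.succ_mod_ne_self {i m : ℕ} (hm : 2 ≤ m) (hi : i < m) : (i + 1) % m ≠ i := by
  rcases Nat.lt_or_ge (i + 1) m with h | h
  · rw [Nat.mod_eq_of_lt h]; omega
  · rw [show i + 1 = m by omega, Nat.mod_self]; omega

theorem sum_add_two_mul_sum_le_of_cyclic_pairs {m c : ℕ} {a : ℕ → ℕ}
    (h : ∀ i ∈ range m, c + a i + a ((i + 1) % m) ≤ ∑ j ∈ range m, a j) :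
    m * c + 2 * ∑ j ∈ range m, a j ≤ m * ∑ j ∈ range m, a j := by
  have := sum_le_sum h
  rw [sum_add_distrib, sum_add_distrib, sum_range_comp_succ_mod a m] at this
  simpa [two_mul, add_assoc] using this

/-- Key combinatorial lemma for the lower bound of the Waldschmidt constant of the
bipyramidal graph ideal `I_{D_n}`: there are no nonnegative integers `a_0, …, a_{n+1}`
with total sum at most `s(n+2) - 1` such that for every `i ∈ {0,…,n+1}` the sum of all
`a_j` except `a_i` and `a_{i+1}` (indices modulo `n+2`) is at least `sn`. -/
theorem stmt11 (n s : ℕ) (hn : 3 ≤ n) (hs : 1 ≤ s) :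
    ¬ ∃ a : ℕ → ℕ,
      (∑ j ∈ Finset.range (n + 2), a j ≤ s * (n + 2) - 1) ∧
      (∀ i ∈ Finset.range (n + 2),
        s * n ≤ ∑ j ∈ ((Finset.range (n + 2)).erase i).erase ((i + 1) % (n + 2)), a j) := by
  rintro ⟨a, hsum, hpairs⟩
  set T := ∑ j ∈ range (n + 2), a j
  have hcyclic : ∀ i ∈ range (n + 2), s * n + a i + a ((i + 1) % (n + 2)) ≤ T := by
    intro i hi
    have hnext : (i + 1) % (n + 2) ∈ range (n + 2) := mem_range.2 (Nat.mod_lt _ (by omega))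
    have hne := Nat.succ_mod_ne_self (by omega) (mem_range.1 hi)
    have hsplit := sum_erase_erase_add_add hi hnext hne a
    have hpair := hpairs i hi
    omega
  have hdouble : (n + 2) * (s * n) + 2 * T ≤ (n + 2) * T :=
    sum_add_two_mul_sum_le_of_cyclic_pairs hcyclic
  have hT : n * (s * (n + 2)) ≤ n * T := by linarith
  have hlarge : s * (n + 2) ≤ T := Nat.le_of_mul_le_mul_left hT (by omega)
  have hpos : 0 < s * (n + 2) := Nat.mul_pos hs (by omega)
  omega
end

section
/- For n ≥ 3 and s ≥ 1, every monomial in the (sn)-th symbolic power of I_{D_n} has degree at least s(n+2), where the symbolic power is the intersection of the (sn)-th powers of the primes in the decomposition of I_{D_n}. -/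
/-!
For each of the `n + 2` cyclically consecutive pairs `{p, p + 1}` of indices in
`{0, …, n + 1}` one of the primes of `I_{D_n}` is generated by variables other than `x_p`
and `x_{p+1}`, so a monomial in its `(sn)`-th power has degree at least `sn` away from those
two variables. Summing these `n + 2` inequalities counts every exponent exactly `n` times,
whence `n · deg ≥ (n + 2) · sn`.
-/

open MvPolynomial

namespace MvPolynomial

variable {σ R : Type*} [CommSemiring R]

theorem aeval_monomial_ite_X_one [DecidableEq σ] (t : Finset σ) (a : σ →₀ ℕ) (c : R) :
    aeval (fun i => if i ∈ t then (Polynomial.X : Polynomial R) else 1) (monomial a c) =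
      Polynomial.C c * Polynomial.X ^ ∑ i ∈ t, a i := by
  have hpow : ∀ i e, (if i ∈ t then (Polynomial.X : Polynomial R) else 1) ^ e =
      Polynomial.X ^ (if i ∈ t then e else 0) := by
    intro i e; split_ifs <;> simp
  rw [aeval_monomial, Polynomial.algebraMap_eq, Finsupp.prod, Finset.prod_congr rfl
    (fun i _ => hpow i (a i)), Finset.prod_pow_eq_pow_sum, Finset.sum_ite_mem]
  congr 2
  refine Finset.sum_subset Finset.inter_subset_right fun i hit hi => ?_
  simp_all

theorem le_sum_of_monomial_mem_span_X_image_pow {t : Finset σ} {m : ℕ} {a : σ →₀ ℕ} {c : R}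
    (hc : c ≠ 0) (h : monomial a c ∈ Ideal.span (X '' ↑t) ^ m) : m ≤ ∑ i ∈ t, a i := by
  classical
  set f : σ → Polynomial R := fun i => if i ∈ t then Polynomial.X else 1
  have hle : (Ideal.span ((X : σ → MvPolynomial σ R) '' t)).map (aeval f) ≤
      Ideal.span {Polynomial.X} := by
    rw [Ideal.map_span, Ideal.span_le]
    rintro _ ⟨_, ⟨i, hi, rfl⟩, rfl⟩
    simp [f, Finset.mem_coe.mp hi]
  have hmap : aeval f (monomial a c) ∈ Ideal.span {Polynomial.X} ^ m :=
    Ideal.pow_right_mono hle m (by rw [← Ideal.map_pow]; exact Ideal.mem_map_of_mem _ h)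
  rw [Ideal.span_singleton_pow, Ideal.mem_span_singleton, aeval_monomial_ite_X_one,
    Polynomial.X_pow_dvd_iff] at hmap
  by_contra! hlt
  simpa [Polynomial.coeff_C_mul_X_pow, hc] using hmap _ hlt

end MvPolynomial

theorem Fin.mul_add_two_mul_sum_le {k m : ℕ} [NeZero k] {a : Fin k → ℕ}
    (h : ∀ q, m + a q + a (q + 1) ≤ ∑ j, a j) : k * m + 2 * ∑ j, a j ≤ k * ∑ j, a j := by
  have hshift : ∑ q, a (q + 1) = ∑ j, a j :=
    Fintype.sum_equiv (Equiv.addRight 1) _ _ fun _ => rfl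
  have := Finset.sum_le_sum fun q (_ : q ∈ Finset.univ) => h q
  simp only [Finset.sum_add_distrib, Finset.sum_const, Finset.card_univ, Fintype.card_fin,
    smul_eq_mul, hshift] at this
  omega

theorem Nat.mod_eq_cases_of_lt_two_mul {x n : ℕ} (h : x < 2 * n) :
    x < n ∧ x % n = x ∨ n ≤ x ∧ x % n = x - n := by
  rcases Nat.lt_or_ge x n with hlt | hge
  · exact Or.inl ⟨hlt, Nat.mod_eq_of_lt hlt⟩
  · exact Or.inr ⟨hge, by rw [Nat.mod_eq_sub_mod hge, Nat.mod_eq_of_lt (by omega)]⟩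

section CycleIdeals

variable (R : Type*) [CommSemiring R] (n : ℕ)

noncomputable abbrev cycVar (j : ℕ) : MvPolynomial (Fin (n + 2)) R := X (Fin.ofNat (n + 2) j)

/-- `{x_i, …, x_{i+len-1}}` with indices cyclic in `{1, …, n}`: the paper's `S_i` and `T_i` are
the runs of length `n - 1` and `n - 2`. -/
def cyclicRun (i len : ℕ) : Set (MvPolynomial (Fin (n + 2)) R) :=
  {p | ∃ k < len, p = cycVar R n ((i + k - 1) % n + 1)}

variable {R n}

theorem cycVar_mem_image_compl_pair {j : ℕ} {q : Fin (n + 2)} (hj : j < n + 2)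
    (hq : j ≠ q) (hq' : j ≠ (q + 1 : Fin (n + 2))) :
    cycVar R n j ∈ X '' ↑({q, q + 1}ᶜ : Finset (Fin (n + 2))) :=
  ⟨Fin.ofNat (n + 2) j, by simp [Fin.ext_iff, Nat.mod_eq_of_lt hj, hq, hq'], rfl⟩

theorem mem_pow_span_X_compl_pair (hn : 2 ≤ n) {m : ℕ} {f : MvPolynomial (Fin (n + 2)) R}
    (hT : ∀ i ∈ Finset.Icc 1 n,
      f ∈ Ideal.span ({cycVar R n 0, cycVar R n (n + 1)} ∪ cyclicRun R n i (n - 2)) ^ m)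
    (hS₀ : ∀ i ∈ Finset.Icc 1 n, f ∈ Ideal.span ({cycVar R n 0} ∪ cyclicRun R n i (n - 1)) ^ m)
    (hS₁ : ∀ i ∈ Finset.Icc 1 n,
      f ∈ Ideal.span ({cycVar R n (n + 1)} ∪ cyclicRun R n i (n - 1)) ^ m)
    (hX : f ∈ Ideal.span {p | ∃ j ∈ Finset.Icc 1 n, p = cycVar R n j} ^ m)
    (q : Fin (n + 2)) : f ∈ Ideal.span (X '' ↑({q, q + 1}ᶜ : Finset (Fin (n + 2)))) ^ m := by
  have hsucc : (q : ℕ) = n + 1 ∧ ((q + 1 : Fin (n + 2)) : ℕ) = 0 ∨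
      ((q + 1 : Fin (n + 2)) : ℕ) = q + 1 := by
    rw [Fin.val_add_one]
    split_ifs with h <;> simp [h]
  have hmono {S : Set (MvPolynomial (Fin (n + 2)) R)} (hS : f ∈ Ideal.span S ^ m)
      (hsub : S ⊆ X '' ↑({q, q + 1}ᶜ : Finset (Fin (n + 2)))) :
      f ∈ Ideal.span (X '' ↑({q, q + 1}ᶜ : Finset (Fin (n + 2)))) ^ m :=
    Ideal.pow_right_mono (Ideal.span_mono hsub) m hS
  -- `{q, q + 1}` is avoided by `⟨x_{n+1}, S_2⟩`, `⟨x_0, x_{n+1}, T_{q+2}⟩`, `⟨x_0, S_1⟩`,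
  -- `⟨x_1, …, x_n⟩` according as `q = 0`, `0 < q < n`, `q = n`, `q = n + 1`.
  obtain hq | hq | hq | hq :
      (q : ℕ) = 0 ∨ (1 ≤ (q : ℕ) ∧ (q : ℕ) < n) ∨ (q : ℕ) = n ∨ (q : ℕ) = n + 1 := by omega
  · refine hmono (hS₁ 2 (Finset.mem_Icc.2 ⟨by omega, hn⟩)) ?_
    rintro _ (rfl | ⟨k, hk, rfl⟩)
    · exact cycVar_mem_image_compl_pair (by omega) (by omega) (by omega)
    · have := Nat.mod_eq_cases_of_lt_two_mul (x := 2 + k - 1) (n := n) (by omega)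
      exact cycVar_mem_image_compl_pair (by omega) (by omega) (by omega)
  · have hi := Nat.mod_eq_cases_of_lt_two_mul (x := (q : ℕ) + 1) (n := n) (by omega)
    refine hmono (hT (((q : ℕ) + 1) % n + 1) (Finset.mem_Icc.2 ⟨by omega, by omega⟩)) ?_
    rintro _ ((rfl | rfl) | ⟨k, hk, rfl⟩)
    · exact cycVar_mem_image_compl_pair (by omega) (by omega) (by omega)
    · exact cycVar_mem_image_compl_pair (by omega) (by omega) (by omega)
    · have := Nat.mod_eq_cases_of_lt_two_mul
        (x := ((q : ℕ) + 1) % n + 1 + k - 1) (n := n) (by omega)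
      exact cycVar_mem_image_compl_pair (by omega) (by omega) (by omega)
  · refine hmono (hS₀ 1 (Finset.mem_Icc.2 ⟨le_rfl, by omega⟩)) ?_
    rintro _ (rfl | ⟨k, hk, rfl⟩)
    · exact cycVar_mem_image_compl_pair (by omega) (by omega) (by omega)
    · have := Nat.mod_eq_cases_of_lt_two_mul (x := 1 + k - 1) (n := n) (by omega)
      exact cycVar_mem_image_compl_pair (by omega) (by omega) (by omega)
  · refine hmono hX ?_
    rintro _ ⟨j, hj, rfl⟩
    rw [Finset.mem_Icc] at hj
    exact cycVar_mem_image_compl_pair (by omega) (by omega) (by omega)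

end CycleIdeals

theorem stmt14_general (K : Type*) [Field K] (n s : ℕ) (hn : 3 ≤ n)
    (e : ℕ → Fin (n + 2)) (he : ∀ k, (e k : ℕ) = k % (n + 2))
    (a : Fin (n + 2) →₀ ℕ) (c : K) (hc : c ≠ 0)
    (hmem : (monomial a c : MvPolynomial (Fin (n + 2)) K) ∈
      (⨅ i ∈ Finset.Icc 1 n,
        (Ideal.span ({X (e 0), X (e (n + 1))} ∪
          {p | ∃ k < n - 2, p = (X (e ((i + k - 1) % n + 1)) : MvPolynomial (Fin (n + 2)) K)}))
          ^ (s * n)) ⊓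
      (⨅ i ∈ Finset.Icc 1 n,
        (Ideal.span ({X (e 0)} ∪
          {p | ∃ k < n - 1, p = (X (e ((i + k - 1) % n + 1)) : MvPolynomial (Fin (n + 2)) K)}))
          ^ (s * n)) ⊓
      (⨅ i ∈ Finset.Icc 1 n,
        (Ideal.span ({X (e (n + 1))} ∪
          {p | ∃ k < n - 1, p = (X (e ((i + k - 1) % n + 1)) : MvPolynomial (Fin (n + 2)) K)}))
          ^ (s * n)) ⊓
      (Ideal.span {p | ∃ j ∈ Finset.Icc 1 n, p = (X (e j) : MvPolynomial (Fin (n + 2)) K)})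
        ^ (s * n)) :
    s * (n + 2) ≤ ∑ j, a j := by
  simp only [Submodule.mem_inf, Submodule.mem_iInf] at hmem
  have he' : ∀ j, e j = Fin.ofNat (n + 2) j := fun j =>
    Fin.ext ((he j).trans (Fin.val_ofNat ..).symm)
  simp only [he'] at hmem
  obtain ⟨⟨⟨hT, hS₀⟩, hS₁⟩, hX⟩ := hmem
  have hpair (q : Fin (n + 2)) : s * n + a q + a (q + 1) ≤ ∑ j, a j := by
    have h := le_sum_of_monomial_mem_span_X_image_pow hc
      (mem_pow_span_X_compl_pair (by omega) hT hS₀ hS₁ hX q)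
    rw [← Finset.sum_compl_add_sum {q, q + 1}, Finset.sum_pair (by simp)]
    omega
  have h := Fin.mul_add_two_mul_sum_le hpair
  refine Nat.le_of_mul_le_mul_left ?_ (show 0 < n by omega)
  linarith

/-- For `n ≥ 3` and `s ≥ 1`, every monomial in the `(sn)`-th symbolic power of `I_{D_n}`
(the intersection of the `(sn)`-th powers of the primes `⟨x_0, x_{n+1}, T_i⟩`,
`⟨x_0, S_i⟩`, `⟨x_{n+1}, S_i⟩` for `i = 1,…,n` and `⟨x_1,…,x_n⟩`, with
`S_i = {x_i,…,x_{i+n-2}}`, `T_i = {x_i,…,x_{i+n-3}}`, cyclic indices modulo `n`) has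
degree at least `s(n+2)`. -/
theorem stmt14 (K : Type*) [Field K] (n s : ℕ) (hn : 3 ≤ n) (hs : 1 ≤ s)
    (e : ℕ → Fin (n + 2)) (he : ∀ k, (e k : ℕ) = k % (n + 2))
    (a : Fin (n + 2) →₀ ℕ) (c : K) (hc : c ≠ 0)
    (hmem : (monomial a c : MvPolynomial (Fin (n + 2)) K) ∈
      (⨅ i ∈ Finset.Icc 1 n,
        (Ideal.span ({X (e 0), X (e (n + 1))} ∪
          {p | ∃ k < n - 2, p = (X (e ((i + k - 1) % n + 1)) : MvPolynomial (Fin (n + 2)) K)}))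
          ^ (s * n)) ⊓
      (⨅ i ∈ Finset.Icc 1 n,
        (Ideal.span ({X (e 0)} ∪
          {p | ∃ k < n - 1, p = (X (e ((i + k - 1) % n + 1)) : MvPolynomial (Fin (n + 2)) K)}))
          ^ (s * n)) ⊓
      (⨅ i ∈ Finset.Icc 1 n,
        (Ideal.span ({X (e (n + 1))} ∪
          {p | ∃ k < n - 1, p = (X (e ((i + k - 1) % n + 1)) : MvPolynomial (Fin (n + 2)) K)}))
          ^ (s * n)) ⊓
      (Ideal.span {p | ∃ j ∈ Finset.Icc 1 n, p = (X (e j) : MvPolynomial (Fin (n + 2)) K)})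
        ^ (s * n)) :
    s * (n + 2) ≤ ∑ j, a j :=
  stmt14_general K n s hn e he a c hc hmem
end

section
/- The monomial x_1 x_2 x_3 x_4 of degree 4 lies in the second symbolic power of I_{B_4} = ⟨x_0x_5, x_1x_3, x_2x_4⟩ ⊂ K[x_0,...,x_5], i.e., it lies in P^2 for each of the eight minimal primes P of I_{B_4}, while no monomial of degree at most 3 lies in this second symbolic power; hence α(I_{B_4}^{(2)}) = 4. -/
/-!
For a set `s` of variables, every monomial in the support of an element of
`⟨X i | i ∈ s⟩ ^ n` has degree at least `n` in the variables of `s`, and a monomial of such degree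
lies in that power. Every minimal prime of `I_{B_4}` contains exactly two of `x_1, …, x_4`,
which puts `x_1 x_2 x_3 x_4` in all eight squares. Conversely, each variable lies in exactly four
of the eight primes, so adding up the eight bounds `2 ≤ deg_P m` gives `16 ≤ 4 deg m` for every
monomial `m` occurring in an element of the symbolic square.
-/

open MvPolynomial

namespace MvPolynomial

variable {σ R : Type*} [CommSemiring R]

theorem le_sum_of_mem_pow_span_X_image {s : Finset σ} {n : ℕ} {f : MvPolynomial σ R}
    (hf : f ∈ Ideal.span (X '' ↑s) ^ n) {m : σ →₀ ℕ} (hm : m ∈ f.support) :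
    n ≤ ∑ i ∈ s, m i := by
  classical
  induction n generalizing f m with
  | zero => exact Nat.zero_le _
  | succ n ih =>
    rw [pow_succ] at hf
    refine Submodule.mul_induction_on (C := fun f => ∀ m ∈ f.support, n + 1 ≤ ∑ i ∈ s, m i) hf
      ?_ ?_ m hm
    · intro p hp q hq m hm
      obtain ⟨a, ha, b, hb, rfl⟩ := Finset.mem_add.mp (support_mul p q hm)
      obtain ⟨i, hi, hbi⟩ := mem_ideal_span_X_image.mp hq b hb
      have hb1 : 1 ≤ ∑ j ∈ s, b j :=
        (Nat.one_le_iff_ne_zero.mpr hbi).trans (Finset.single_le_sum (by simp) hi)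
      simpa only [Finsupp.add_apply, Finset.sum_add_distrib] using add_le_add (ih hp ha) hb1
    · intro p q hp hq m hm
      rcases Finset.mem_union.mp (support_add hm) with h | h
      exacts [hp m h, hq m h]

theorem monomial_mem_pow_span_X_image {s : Finset σ} {n : ℕ} {m : σ →₀ ℕ} (c : R)
    (h : n ≤ ∑ i ∈ s, m i) : monomial m c ∈ Ideal.span (X '' ↑s) ^ n := by
  classical
  induction n generalizing m with
  | zero => simp
  | succ n ih =>
    obtain ⟨i, hi, hmi⟩ : ∃ i ∈ s, m i ≠ 0 := by
      by_contra! h0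
      simp [Finset.sum_eq_zero h0] at h
    obtain ⟨m', rfl⟩ :=
      le_iff_exists_add'.mp (Finsupp.single_le_iff.mpr (Nat.one_le_iff_ne_zero.mpr hmi))
    have hm' : n ≤ ∑ j ∈ s, m' j := by
      simpa [Finset.sum_add_distrib, Finsupp.single_apply, hi] using h
    rw [monomial_add_single, pow_one, pow_succ]
    exact Ideal.mul_mem_mul (ih hm') (Ideal.subset_span ⟨i, hi, rfl⟩)

theorem sInf_totalDegree_eq {I : Ideal (MvPolynomial σ R)} {p : MvPolynomial σ R} {d : ℕ}
    (hpI : p ∈ I) (hp₀ : p ≠ 0) (hpd : p.totalDegree = d)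
    (hI : ∀ f ∈ I, ∀ m ∈ f.support, d ≤ m.degree) :
    sInf {e : ℕ | ∃ f ∈ I, f ≠ 0 ∧ f.totalDegree = e} = d := by
  have hd : d ∈ {e : ℕ | ∃ f ∈ I, f ≠ 0 ∧ f.totalDegree = e} := ⟨p, hpI, hp₀, hpd⟩
  refine le_antisymm (Nat.sInf_le hd) (le_csInf ⟨d, hd⟩ ?_)
  rintro e ⟨f, hf, hf₀, rfl⟩
  obtain ⟨m, hm⟩ := support_nonempty.mpr hf₀
  exact (hI f hf m hm).trans (le_totalDegree hm)

end MvPolynomial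

/-- The monomial `x_1 x_2 x_3 x_4` lies in the second symbolic power of `I_{B_4}` (the
intersection of the squares of its eight minimal primes), no monomial of degree at most
`3` lies in this second symbolic power, and hence `α(I_{B_4}^{(2)}) = 4`. -/
theorem stmt17 (K : Type*) [Field K]
    (sym2 : Ideal (MvPolynomial (Fin 6) K))
    (hsym2 : sym2 =
      Ideal.span {(X 0 : MvPolynomial (Fin 6) K), X 1, X 2} ^ 2 ⊓
      Ideal.span {(X 0 : MvPolynomial (Fin 6) K), X 2, X 3} ^ 2 ⊓
      Ideal.span {(X 0 : MvPolynomial (Fin 6) K), X 3, X 4} ^ 2 ⊓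
      Ideal.span {(X 0 : MvPolynomial (Fin 6) K), X 1, X 4} ^ 2 ⊓
      Ideal.span {(X 1 : MvPolynomial (Fin 6) K), X 2, X 5} ^ 2 ⊓
      Ideal.span {(X 2 : MvPolynomial (Fin 6) K), X 3, X 5} ^ 2 ⊓
      Ideal.span {(X 3 : MvPolynomial (Fin 6) K), X 4, X 5} ^ 2 ⊓
      Ideal.span {(X 1 : MvPolynomial (Fin 6) K), X 4, X 5} ^ 2) :
    (X 1 * X 2 * X 3 * X 4 : MvPolynomial (Fin 6) K) ∈ sym2 ∧
    (∀ (a : Fin 6 →₀ ℕ) (c : K), c ≠ 0 →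
      (monomial a c : MvPolynomial (Fin 6) K) ∈ sym2 → 4 ≤ ∑ j, a j) ∧
    sInf {d : ℕ | ∃ f ∈ sym2, f ≠ 0 ∧ f.totalDegree = d} = 4 := by
  have hspan (i j k : Fin 6) : Ideal.span {(X i : MvPolynomial (Fin 6) K), X j, X k} =
      Ideal.span (X '' ↑({i, j, k} : Finset (Fin 6))) := by
    simp [Set.image_insert_eq]
  simp only [hspan] at hsym2
  have hX : (X 1 * X 2 * X 3 * X 4 : MvPolynomial (Fin 6) K) =
      monomial (.single 1 1 + .single 2 1 + .single 3 1 + .single 4 1) 1 := by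
    simp only [X, monomial_mul, mul_one]
  have hmem : (X 1 * X 2 * X 3 * X 4 : MvPolynomial (Fin 6) K) ∈ sym2 := by
    rw [hsym2, hX]
    refine ⟨⟨⟨⟨⟨⟨⟨?_, ?_⟩, ?_⟩, ?_⟩, ?_⟩, ?_⟩, ?_⟩, ?_⟩ <;>
      exact monomial_mem_pow_span_X_image _ (by simp [Finsupp.single_apply])
  have hdeg : ∀ f ∈ sym2, ∀ m ∈ f.support, 4 ≤ m.degree := by
    rw [hsym2]
    rintro f ⟨⟨⟨⟨⟨⟨⟨h₁, h₂⟩, h₃⟩, h₄⟩, h₅⟩, h₆⟩, h₇⟩, h₈⟩ m hm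
    have b₁ := le_sum_of_mem_pow_span_X_image h₁ hm
    have b₂ := le_sum_of_mem_pow_span_X_image h₂ hm
    have b₃ := le_sum_of_mem_pow_span_X_image h₃ hm
    have b₄ := le_sum_of_mem_pow_span_X_image h₄ hm
    have b₅ := le_sum_of_mem_pow_span_X_image h₅ hm
    have b₆ := le_sum_of_mem_pow_span_X_image h₆ hm
    have b₇ := le_sum_of_mem_pow_span_X_image h₇ hm
    have b₈ := le_sum_of_mem_pow_span_X_image h₈ hm
    simp (disch := decide) only [Finset.sum_insert, Finset.sum_singleton, Finsupp.degree_eq_sum,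
      Fin.sum_univ_six] at b₁ b₂ b₃ b₄ b₅ b₆ b₇ b₈ ⊢
    omega
  have hX₀ : (X 1 * X 2 * X 3 * X 4 : MvPolynomial (Fin 6) K) ≠ 0 := by
    simp [X_ne_zero]
  have hXdeg : (X 1 * X 2 * X 3 * X 4 : MvPolynomial (Fin 6) K).totalDegree = 4 := by
    rw [hX, totalDegree_monomial _ one_ne_zero]
    simp [Finsupp.sum_add_index]
  refine ⟨hmem, fun a c hc ha => ?_, sInf_totalDegree_eq hmem hX₀ hXdeg hdeg⟩
  simpa [Finsupp.degree_eq_sum] using hdeg _ ha a (by simp [hc])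
end
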